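/- Let U : ℝ → Matrix (Fin m) (Fin n) ℂ be a differentiable family of complex m×n matrices and N ≥ 1 a natural number. Define M : ℝ → Matrix (Fin N × Fin m) (Fin n) ℂ by M(t) ((j, a), b) = U(t) (a, b) / √N (the matrix obtained by stacking N copies of U on top of each other and dividing by √N). Then for all s, t ∈ ℝ: (i) M(t)ᴴ · M(t) = U(t)ᴴ · U(t); (ii) M(t)ᴴ · M′(t) = U(t)ᴴ · U′(t); and (iii) Tr( (M·Mᴴ)′(s) · (M·Mᴴ)′(t) ) = Tr( (U·Uᴴ)′(s) · (U·Uᴴ)′(t) ). In particular, if U is a universal matrix for a family of connections then so is M, and the universal metrics g⁰ and g¹ built from U and from M agree. -/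

import Mathlib

open Matrix

/-- Entrywise derivative of a matrix-valued function of a real variable. -/
noncomputable def matDeriv {ι κ : Type*} (F : ℝ → Matrix ι κ ℂ) (t : ℝ) :
    Matrix ι κ ℂ :=
  fun i j => deriv (fun s => F s i j) t

/-- The matrix obtained by stacking `N` copies of `U` on top of each other and
dividing by `√N`. -/
noncomputable def stackU {m n : ℕ} (N : ℕ) (U : ℝ → Matrix (Fin m) (Fin n) ℂ) (t : ℝ) :
    Matrix (Fin N × Fin m) (Fin n) ℂ :=
  fun p b => U t p.2 b / ((Real.sqrt N : ℝ) : ℂ)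

/-!
The stacked matrix is `(√N)⁻¹ • U.submatrix Prod.snd id`, a reindexing along the projection
`Fin N × Fin m → Fin m`. A product contracting over the stacked index counts every term `N`
times, and the two factors `(√N)⁻¹` cancel that count. So `MᴴM = UᴴU` and `MᴴM′ = UᴴU′`, while
`MMᴴ = N⁻¹ • (UUᴴ).submatrix Prod.snd Prod.snd`: in `Tr((MMᴴ)′(s)(MMᴴ)′(t))` the scalars give
`N⁻²`, the inner contraction `N` and the trace another `N`. The entrywise derivative commutes
with the constant scaling and the reindexing.
-/

namespace Matrix

variable {ι l m n o p R : Type*} [Fintype ι]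

-- Without the ascriptions on `Prod.snd`, `*` elaborates to the `CStarMatrix` multiplication.

theorem submatrix_snd_mul_submatrix_snd [Fintype n] [NonUnitalNonAssocSemiring R]
    (A : Matrix m n R) (B : Matrix n p R) (e : l → m) (f : o → p) :
    A.submatrix e (Prod.snd : ι × n → n) * B.submatrix (Prod.snd : ι × n → n) f =
      Fintype.card ι • (A * B).submatrix e f := by
  ext i k
  simp [mul_apply, Fintype.sum_prod_type]

theorem trace_submatrix_snd_snd [Fintype m] [AddCommMonoid R] (A : Matrix m m R) :
    (A.submatrix Prod.snd Prod.snd : Matrix (ι × m) (ι × m) R).trace =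
      Fintype.card ι • A.trace := by
  simp [trace, Fintype.sum_prod_type]

end Matrix

theorem matDeriv_smul_submatrix {ι κ ι' κ' : Type*} (r : ℝ) (F : ℝ → Matrix ι κ ℂ)
    (e : ι' → ι) (f : κ' → κ) (t : ℝ) :
    matDeriv (fun u => r • (F u).submatrix e f) t = r • (matDeriv F t).submatrix e f := by
  ext i j
  exact deriv_fun_const_smul_field r _

noncomputable def normalizedStack (ι : Type*) [Fintype ι] {m n : Type*} (A : Matrix m n ℂ) :
    Matrix (ι × m) n ℂ :=
  (Real.sqrt (Fintype.card ι))⁻¹ • A.submatrix Prod.snd id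

section NormalizedStack

variable (ι : Type*) [Fintype ι] {m n k : Type*}

theorem normalizedStack_mul_conjTranspose [Fintype n] (A B : Matrix m n ℂ) :
    normalizedStack ι A * (normalizedStack ι B)ᴴ =
      ((Fintype.card ι : ℝ)⁻¹) • (A * Bᴴ).submatrix Prod.snd Prod.snd := by
  rw [normalizedStack, normalizedStack, conjTranspose_smul, star_trivial, conjTranspose_submatrix,
    Matrix.smul_mul, Matrix.mul_smul, smul_smul, ← mul_inv,
    Real.mul_self_sqrt (Nat.cast_nonneg _), ← submatrix_mul _ _ _ _ _ Function.bijective_id]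

theorem conjTranspose_normalizedStack_mul [Nonempty ι] [Fintype m] (A : Matrix m n ℂ)
    (B : Matrix m k ℂ) :
    (normalizedStack ι A)ᴴ * normalizedStack ι B = Aᴴ * B := by
  rw [normalizedStack, normalizedStack, conjTranspose_smul, star_trivial, conjTranspose_submatrix,
    Matrix.smul_mul, Matrix.mul_smul, smul_smul, ← mul_inv,
    Real.mul_self_sqrt (Nat.cast_nonneg _), submatrix_snd_mul_submatrix_snd, submatrix_id_id,
    ← Nat.cast_smul_eq_nsmul ℝ, smul_smul, inv_mul_cancel₀ (by positivity), one_smul]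

theorem matDeriv_normalizedStack (F : ℝ → Matrix m n ℂ) (t : ℝ) :
    matDeriv (fun u => normalizedStack ι (F u)) t = normalizedStack ι (matDeriv F t) :=
  matDeriv_smul_submatrix _ F _ _ t

theorem trace_matDeriv_normalizedStack_projector_mul [Nonempty ι] [Fintype m] [Fintype n]
    (F : ℝ → Matrix m n ℂ) (s t : ℝ) :
    (matDeriv (fun u => normalizedStack ι (F u) * (normalizedStack ι (F u))ᴴ) s *
        matDeriv (fun u => normalizedStack ι (F u) * (normalizedStack ι (F u))ᴴ) t).trace =
      (matDeriv (fun u => F u * (F u)ᴴ) s * matDeriv (fun u => F u * (F u)ᴴ) t).trace := by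
  have hcard : (Fintype.card ι : ℝ) ≠ 0 := by positivity
  simp only [normalizedStack_mul_conjTranspose, matDeriv_smul_submatrix, Matrix.smul_mul,
    Matrix.mul_smul, submatrix_snd_mul_submatrix_snd, trace_smul, trace_submatrix_snd_snd,
    ← Nat.cast_smul_eq_nsmul ℝ, smul_smul]
  rw [inv_mul_cancel₀ hcard, mul_one, inv_mul_cancel₀ hcard, one_smul]

end NormalizedStack

theorem stackU_eq_normalizedStack {m n : ℕ} (N : ℕ) (U : ℝ → Matrix (Fin m) (Fin n) ℂ) :
    stackU N U = fun t => normalizedStack (Fin N) (U t) := by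
  ext t p b
  simp [stackU, normalizedStack, Complex.real_smul, div_eq_inv_mul]

theorem stacked_universal_matrix_same_metrics_general {m n : ℕ} (N : ℕ) (hN : 1 ≤ N)
    (U : ℝ → Matrix (Fin m) (Fin n) ℂ) :
    (∀ t : ℝ, (stackU N U t)ᴴ * stackU N U t = (U t)ᴴ * U t) ∧
    (∀ t : ℝ, (stackU N U t)ᴴ * matDeriv (stackU N U) t = (U t)ᴴ * matDeriv U t) ∧
    (∀ s t : ℝ,
      (matDeriv (fun u => stackU N U u * (stackU N U u)ᴴ) s *
          matDeriv (fun u => stackU N U u * (stackU N U u)ᴴ) t).trace =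
        (matDeriv (fun u => U u * (U u)ᴴ) s *
          matDeriv (fun u => U u * (U u)ᴴ) t).trace) := by
  have : Nonempty (Fin N) := ⟨⟨0, hN⟩⟩
  rw [stackU_eq_normalizedStack]
  exact ⟨fun t => conjTranspose_normalizedStack_mul _ _ _,
    fun t => by rw [matDeriv_normalizedStack, conjTranspose_normalizedStack_mul],
    trace_matDeriv_normalizedStack_projector_mul _ U⟩

/-- Stacking `N ≥ 1` copies of a universal matrix `U` (normalized by `1/√N`) changes
neither `Uᴴ U`, nor the connection component `Uᴴ U′`, nor the `g⁰`-integrand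
`Tr((UUᴴ)′(s)·(UUᴴ)′(t))`; hence the stacked matrix is again universal and the
universal metrics `g⁰` and `g¹` of `U` and `M` agree. -/
theorem stacked_universal_matrix_same_metrics {m n : ℕ} (N : ℕ) (hN : 1 ≤ N)
    (U : ℝ → Matrix (Fin m) (Fin n) ℂ)
    (hU : ∀ i j, Differentiable ℝ (fun t => U t i j)) :
    (∀ t : ℝ, (stackU N U t)ᴴ * stackU N U t = (U t)ᴴ * U t) ∧
    (∀ t : ℝ, (stackU N U t)ᴴ * matDeriv (stackU N U) t = (U t)ᴴ * matDeriv U t) ∧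
    (∀ s t : ℝ,
      (matDeriv (fun u => stackU N U u * (stackU N U u)ᴴ) s *
          matDeriv (fun u => stackU N U u * (stackU N U u)ᴴ) t).trace =
        (matDeriv (fun u => U u * (U u)ᴴ) s *
          matDeriv (fun u => U u * (U u)ᴴ) t).trace) :=
  stacked_universal_matrix_same_metrics_general N hN U
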